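/- Helstrom upper bound in coherence form: let v₀, v₁ ∈ EuclideanSpace ℝ (Fin 3) with ‖v₀‖ ≤ 1 and ‖v₁‖ ≤ 1, and let p₀, p₁ ≥ 0 with p₀ + p₁ = 1. Then for every binary POVM (Q₀, Q₁) on ℂ², the probability of correct decision satisfies p₀·Re(trace(Q₀ * ρ(v₀))) + p₁·Re(trace(Q₁ * ρ(v₁))) ≤ (1 + max(|p₁ - p₀|, ‖p₁ • v₁ - p₀ • v₀‖))/2. -/

import Mathlib

open Matrix
open scoped ComplexOrder

/-- The Pauli matrix σx. -/
def pauliX : Matrix (Fin 2) (Fin 2) ℂ := !![0, 1; 1, 0]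

/-- The Pauli matrix σy. -/
def pauliY : Matrix (Fin 2) (Fin 2) ℂ := !![0, -Complex.I; Complex.I, 0]

/-- The Pauli matrix σz. -/
def pauliZ : Matrix (Fin 2) (Fin 2) ℂ := !![1, 0; 0, -1]

/-- The coherence-vector (Bloch) matrix associated to `v ∈ ℝ³`. -/
noncomputable def rho (v : EuclideanSpace ℝ (Fin 3)) : Matrix (Fin 2) (Fin 2) ℂ :=
  (1/2 : ℂ) • (1 + (v 0 : ℂ) • pauliX + (v 1 : ℂ) • pauliY + (v 2 : ℂ) • pauliZ)

lemma diag_facts {A : Matrix (Fin 2) (Fin 2) ℂ} (hA : A.PosSemidef) (i : Fin 2) :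
    0 ≤ (A i i).re ∧ (A i i).im = 0 := by
  have h := hA.dotProduct_mulVec_nonneg (Pi.single i 1)
  fin_cases i <;>
  · simp [dotProduct, mulVec, Pi.single_apply, Fin.sum_univ_two] at h
    rw [Complex.le_def] at h
    simpa using ⟨h.1, h.2.symm⟩

lemma det_facts {A : Matrix (Fin 2) (Fin 2) ℂ} (hA : A.PosSemidef) :
    0 ≤ (A.det).re ∧ (A.det).im = 0 := by
  rw [hA.1.det_eq_prod_eigenvalues, Fin.prod_univ_two]
  have h0 := hA.eigenvalues_nonneg 0
  have h1 := hA.eigenvalues_nonneg 1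
  constructor
  · simp; positivity
  · simp

lemma herm_offdiag {A : Matrix (Fin 2) (Fin 2) ℂ} (hA : A.IsHermitian) :
    A 1 0 = starRingEnd ℂ (A 0 1) := by
  have := congrFun (congrFun hA.symm 1) 0
  simpa [Matrix.conjTranspose_apply] using this

lemma trace_formula (v : EuclideanSpace ℝ (Fin 3)) (a c br bi : ℝ)
    (A : Matrix (Fin 2) (Fin 2) ℂ) (e00 : A 0 0 = (a:ℂ)) (e11 : A 1 1 = (c:ℂ))
    (e01 : A 0 1 = (br:ℂ) + bi * Complex.I) (e10 : A 1 0 = (br:ℂ) - bi * Complex.I) :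
    (A * rho v).trace.re = (a*(1 + v 2) + c*(1 - v 2) + 2*(br * v 0 - bi * v 1))/2 := by
  simp [Matrix.trace_fin_two, Matrix.mul_apply, Fin.sum_univ_two, rho, pauliX, pauliY, pauliZ,
    Matrix.one_apply, e00, e11, e01, e10]
  ring

lemma cs3 (u1 u2 u3 w1 w2 w3 r t : ℝ) (hr : 0 ≤ r) (ht : 0 ≤ t)
    (hw : w1^2+w2^2+w3^2 ≤ r^2) (hu : u1^2+u2^2+u3^2 ≤ t^2) :
    u1*w1+u2*w2+u3*w3 ≤ r*t := by
  rcases eq_or_lt_of_le hr with h|h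
  · have h1 : w1 = 0 := by nlinarith [sq_nonneg w1, sq_nonneg w2, sq_nonneg w3]
    have h2 : w2 = 0 := by nlinarith [sq_nonneg w1, sq_nonneg w2, sq_nonneg w3]
    have h3 : w3 = 0 := by nlinarith [sq_nonneg w1, sq_nonneg w2, sq_nonneg w3]
    simp [h1, h2, h3]; positivity
  rcases eq_or_lt_of_le ht with h'|h'
  · have h1 : u1 = 0 := by nlinarith [sq_nonneg u1, sq_nonneg u2, sq_nonneg u3]
    have h2 : u2 = 0 := by nlinarith [sq_nonneg u1, sq_nonneg u2, sq_nonneg u3]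
    have h3 : u3 = 0 := by nlinarith [sq_nonneg u1, sq_nonneg u2, sq_nonneg u3]
    simp [h1, h2, h3]; positivity
  have key : r^2*(u1^2+u2^2+u3^2) ≤ r^2*t^2 := by nlinarith
  have key2 : t^2*(w1^2+w2^2+w3^2) ≤ t^2*r^2 := by nlinarith
  nlinarith [sq_nonneg (u1*r - w1*t), sq_nonneg (u2*r - w2*t), sq_nonneg (u3*r - w3*t),
    mul_pos h h']


/-- **Helstrom upper bound in coherence form.** For states with Bloch vectors `v₀, v₁`
and prior `(p₀, p₁)`, every binary POVM has probability of correct decision at most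
`(1 + max(|p₁ - p₀|, ‖p₁ v₁ - p₀ v₀‖))/2`. -/
theorem helstrom_upper_bound
    (v₀ v₁ : EuclideanSpace ℝ (Fin 3)) (hv₀ : ‖v₀‖ ≤ 1) (hv₁ : ‖v₁‖ ≤ 1)
    (p₀ p₁ : ℝ) (hp₀ : 0 ≤ p₀) (hp₁ : 0 ≤ p₁) (hp : p₀ + p₁ = 1)
    (Q₀ Q₁ : Matrix (Fin 2) (Fin 2) ℂ)
    (hQ₀ : Q₀.PosSemidef) (hQ₁ : Q₁.PosSemidef) (hQ : Q₀ + Q₁ = 1) :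
    p₀ * (Q₀ * rho v₀).trace.re + p₁ * (Q₁ * rho v₁).trace.re ≤
      (1 + max |p₁ - p₀| ‖p₁ • v₁ - p₀ • v₀‖) / 2 := by
  -- entries of Q₁
  set a := (Q₁ 0 0).re with ha
  set c := (Q₁ 1 1).re with hc
  set br := (Q₁ 0 1).re with hbr
  set bi := (Q₁ 0 1).im with hbi
  obtain ⟨ha0, hai⟩ := diag_facts hQ₁ 0
  obtain ⟨hc0, hci⟩ := diag_facts hQ₁ 1
  replace ha0 : 0 ≤ a := ha0
  replace hc0 : 0 ≤ c := hc0
  have e00 : Q₁ 0 0 = (a:ℂ) := Complex.ext (by simp [ha]) (by simp [hai])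
  have e11 : Q₁ 1 1 = (c:ℂ) := Complex.ext (by simp [hc]) (by simp [hci])
  have e01 : Q₁ 0 1 = (br:ℂ) + bi * Complex.I := Complex.ext (by simp [hbr]) (by simp [hbi])
  have e10 : Q₁ 1 0 = (br:ℂ) - bi * Complex.I := by
    rw [herm_offdiag hQ₁.1, e01]
    simp [map_add, Complex.conj_ofReal]
    ring
  have hQ0eq : Q₀ = 1 - Q₁ := eq_sub_of_add_eq hQ
  have f00 : Q₀ 0 0 = ((1 - a : ℝ) : ℂ) := by
    rw [hQ0eq]; simp [Matrix.one_apply, e00]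
  have f11 : Q₀ 1 1 = ((1 - c : ℝ) : ℂ) := by
    rw [hQ0eq]; simp [Matrix.one_apply, e11]
  have f01 : Q₀ 0 1 = ((-br : ℝ):ℂ) + ((-bi : ℝ):ℂ) * Complex.I := by
    rw [hQ0eq]; simp [Matrix.one_apply, e01]; ring
  have f10 : Q₀ 1 0 = ((-br : ℝ):ℂ) - ((-bi : ℝ):ℂ) * Complex.I := by
    rw [hQ0eq]; simp [Matrix.one_apply, e10]; ring
  -- bounds a,c in [0,1]
  have ha1 : a ≤ 1 := by
    have := (diag_facts hQ₀ 0).1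
    rw [f00] at this; simp at this; linarith
  have hc1 : c ≤ 1 := by
    have := (diag_facts hQ₀ 1).1
    rw [f11] at this; simp at this; linarith
  -- determinant inequalities
  have hdet1 : br^2 + bi^2 ≤ a * c := by
    have h := (det_facts hQ₁).1
    rw [Matrix.det_fin_two, e00, e11, e01, e10] at h
    have : ((a:ℂ) * c - ((br:ℂ) + bi * Complex.I) * ((br:ℂ) - bi * Complex.I)).re
        = a*c - (br^2 + bi^2) := by
      simp [Complex.mul_re, Complex.add_re, Complex.sub_re, Complex.add_im, Complex.sub_im]
      ring
    rw [this] at h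
    linarith
  have hdet0 : br^2 + bi^2 ≤ (1-a) * (1-c) := by
    have h := (det_facts hQ₀).1
    rw [Matrix.det_fin_two, f00, f11, f01, f10] at h
    have : (((1-a:ℝ):ℂ) * ((1-c:ℝ):ℂ) - (((-br:ℝ):ℂ) + ((-bi:ℝ):ℂ) * Complex.I) * (((-br:ℝ):ℂ) - ((-bi:ℝ):ℂ) * Complex.I)).re
        = (1-a)*(1-c) - (br^2 + bi^2) := by
      simp [Complex.mul_re, Complex.add_re, Complex.sub_re, Complex.add_im, Complex.sub_im]
      ring
    rw [this] at h
    linarith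
  clear_value a c br bi
  -- trace values
  rw [trace_formula v₁ a c br bi Q₁ e00 e11 e01 e10,
      trace_formula v₀ (1-a) (1-c) (-br) (-bi) Q₀ f00 f11 f01 f10]
  -- norm
  set r := ‖p₁ • v₁ - p₀ • v₀‖ with hrdef
  have hr0 : 0 ≤ r := norm_nonneg _
  set w0 := p₁ * v₁ 0 - p₀ * v₀ 0 with hw0
  set w1 := p₁ * v₁ 1 - p₀ * v₀ 1 with hw1
  set w2 := p₁ * v₁ 2 - p₀ * v₀ 2 with hw2
  have hr2 : w0^2 + w1^2 + w2^2 = r^2 := by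
    rw [hrdef, EuclideanSpace.norm_eq]
    rw [Real.sq_sqrt (by positivity)]
    simp [Fin.sum_univ_three, hw0, hw1, hw2, sq_abs]
  clear_value w0 w1 w2 r
  clear hrdef ha hc hbr hbi e00 e11 e01 e10 f00 f11 f01 f10 hai hci hQ hQ0eq hQ₀ hQ₁ hv₀ hv₁
  clear Q₀ Q₁
  -- Cauchy-Schwarz applications
  have hcs1 : (2*br)*w0 + (-2*bi)*w1 + (a-c)*w2 ≤ r * (a + c) := by
    apply cs3 _ _ _ _ _ _ _ _ hr0 (by linarith) (le_of_eq hr2)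
    nlinarith
  have hcs2 : (2*br)*w0 + (-2*bi)*w1 + (a-c)*w2 ≤ r * (2 - (a + c)) := by
    apply cs3 _ _ _ _ _ _ _ _ hr0 (by linarith) (le_of_eq hr2)
    nlinarith
  have key : p₀ * (((1 - a) * (1 + v₀ 2) + (1 - c) * (1 - v₀ 2) + 2 * (-br * v₀ 0 - -bi * v₀ 1)) / 2) +
      p₁ * ((a * (1 + v₁ 2) + c * (1 - v₁ 2) + 2 * (br * v₁ 0 - bi * v₁ 1)) / 2)
      = p₀ + ((p₁ - p₀)*(a+c) + ((2*br)*w0 + (-2*bi)*w1 + (a-c)*w2))/2 := by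
    rw [hw0, hw1, hw2]; ring
  rw [key]
  clear hw0 hw1 hw2 key hr2
  set M := max |p₁ - p₀| r with hM
  have hMd : p₁ - p₀ ≤ M := le_trans (le_abs_self _) (le_max_left _ _)
  have hMd' : -(p₁ - p₀) ≤ M := le_trans (neg_le_abs _) (le_max_left _ _)
  have hMr : r ≤ M := le_max_right _ _
  rcases le_total (a + c) 1 with ht | ht
  · nlinarith [mul_le_mul_of_nonneg_right hMr (by linarith : (0:ℝ) ≤ a + c),
      mul_le_mul_of_nonneg_right hMd' (by linarith : (0:ℝ) ≤ 1 - (a+c))]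
  · nlinarith [mul_le_mul_of_nonneg_right hMr (by linarith : (0:ℝ) ≤ 2 - (a + c)),
      mul_le_mul_of_nonneg_right hMd (by linarith : (0:ℝ) ≤ (a+c) - 1)]
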